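/- For real y, z with 0 ≤ y < 1, 0 ≤ z < 1: ∑_{(a,b): gcd(a,b)=1, a ≥ 0, b ≥ 1} (1/b) · log(1 - y^a z^b) = (1/(1-y)) · log(1 - z). Equivalently, ∏_{gcd(a,b)=1, a≥0, b>0} (1 - y^a z^b)^{1/b} = (1-z)^{1/(1-y)}. -/

import Mathlib

/-!
Expand `log (1 - x) = -∑_{k ≥ 1} x^k / k` at `x = y^a z^b`. Every pair `(A, B)` with `B ≥ 1`
is uniquely `(k a, k b)` with `(a, b)` coprime and `k = gcd (A, B)`, and `(1/b)(1/k) = 1/B`, so the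
triple sum over `(a, b, k)` is the double sum `∑_{A, B} y^A (-z^B / B) = log (1 - z) / (1 - y)`.
The product form follows by exponentiating.
-/

open Real

def coprimePairsProdPNatEquiv : {p : ℕ × ℕ+ // Nat.gcd p.1 p.2 = 1} × ℕ+ ≃ ℕ × ℕ+ where
  toFun x := (x.1.val.1 * x.2, x.1.val.2 * x.2)
  invFun q :=
    let d : ℕ+ := ⟨Nat.gcd q.1 q.2, Nat.gcd_pos_of_pos_right _ q.2.pos⟩
    (⟨(q.1 / d, ⟨q.2 / d, Nat.div_pos (Nat.gcd_le_right _ q.2.pos) d.pos⟩),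
        Nat.coprime_div_gcd_div_gcd d.pos⟩, d)
  left_inv := by
    rintro ⟨⟨⟨a, b⟩, hab⟩, k⟩
    have hgcd : Nat.gcd (a * k) (b * k) = k := by rw [Nat.gcd_mul_right, hab, one_mul]
    refine Prod.ext (Subtype.ext (Prod.ext ?_ (PNat.eq ?_))) (PNat.eq ?_) <;>
      simp [hgcd]
  right_inv := by
    rintro ⟨A, B⟩
    refine Prod.ext ?_ (PNat.eq ?_)
    · exact Nat.div_mul_cancel (Nat.gcd_dvd_left _ _)
    · exact Nat.div_mul_cancel (Nat.gcd_dvd_right _ _)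

theorem Real.hasSum_pnat_pow_div_log {x : ℝ} (h : |x| < 1) :
    HasSum (fun k : ℕ+ => -(x ^ (k : ℕ) / k)) (log (1 - x)) := by
  refine hasSum_pnat_iff_hasSum_succ (f := fun k : ℕ => -(x ^ k / k)) |>.mpr ?_
  simpa using (hasSum_pow_div_log_of_abs_lt_one h).neg

theorem abs_pow_mul_pow_lt_one {y z : ℝ} (hy : |y| < 1) (hz : |z| < 1) (a : ℕ) {b : ℕ}
    (hb : b ≠ 0) : |y ^ a * z ^ b| < 1 := by
  rw [abs_mul, abs_pow, abs_pow]
  exact mul_lt_one_of_nonneg_of_lt_one_right (pow_le_one₀ (abs_nonneg y) hy.le)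
    (by positivity) (pow_lt_one₀ (abs_nonneg z) hz hb)

theorem hasSum_pow_mul_neg_pow_div {y z : ℝ} (hy : |y| < 1) (hz : |z| < 1) :
    HasSum (fun q : ℕ × ℕ+ => y ^ q.1 * -(z ^ (q.2 : ℕ) / q.2)) (1 / (1 - y) * log (1 - z)) := by
  have hgeom : HasSum (fun a : ℕ => y ^ a) (1 / (1 - y)) := by
    simpa only [one_div] using hasSum_geometric_of_abs_lt_one hy
  have hgeom_norm : Summable fun a : ℕ => ‖y ^ a‖ := by
    simpa [norm_pow] using summable_geometric_of_lt_one (abs_nonneg y) hy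
  have hlog_norm : Summable fun b : ℕ+ => ‖-(z ^ (b : ℕ) / b)‖ := by
    have := (hasSum_pnat_pow_div_log (x := |z|) (by rwa [abs_abs])).summable.neg
    simpa [abs_div] using this
  exact HasSum.mul (f := fun a : ℕ => y ^ a) (g := fun b : ℕ+ => -(z ^ (b : ℕ) / b)) hgeom
    (hasSum_pnat_pow_div_log hz) (summable_mul_of_summable_norm hgeom_norm hlog_norm)

theorem hasSum_coprime_one_div_mul_log {y z : ℝ} (hy : |y| < 1) (hz : |z| < 1) :
    HasSum (fun p : {p : ℕ × ℕ+ // Nat.gcd p.1 p.2 = 1} =>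
      1 / (p.val.2 : ℝ) * log (1 - y ^ p.val.1 * z ^ (p.val.2 : ℕ)))
      (1 / (1 - y) * log (1 - z)) := by
  have hpairs := coprimePairsProdPNatEquiv.hasSum_iff.mpr (hasSum_pow_mul_neg_pow_div hy hz)
  refine hpairs.prod_fiberwise fun ⟨⟨a, b⟩, _⟩ => ?_
  refine ((hasSum_pnat_pow_div_log (abs_pow_mul_pow_lt_one hy hz a b.ne_zero)).mul_left
    (1 / (b : ℝ))).congr_fun fun k => ?_
  simp only [coprimePairsProdPNatEquiv, Equiv.coe_fn_mk, Function.comp_apply, PNat.mul_coe,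
    Nat.cast_mul, pow_mul, mul_pow, mul_neg, one_div, neg_inj]
  field_simp

theorem hasProd_coprime_rpow_one_div {y z : ℝ} (hy : |y| < 1) (hz : |z| < 1) :
    HasProd (fun p : {p : ℕ × ℕ+ // Nat.gcd p.1 p.2 = 1} =>
      (1 - y ^ p.val.1 * z ^ (p.val.2 : ℕ)) ^ ((1 : ℝ) / (p.val.2 : ℝ)))
      ((1 - z) ^ (1 / (1 - y))) := by
  have hz' : 0 < 1 - z := by linarith [le_abs_self z]
  rw [rpow_def_of_pos hz', mul_comm (log _)]
  refine (hasSum_coprime_one_div_mul_log hy hz).rexp.congr_fun fun ⟨⟨a, b⟩, _⟩ => ?_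
  have hpos : 0 < 1 - y ^ a * z ^ (b : ℕ) := by
    linarith [le_abs_self (y ^ a * z ^ (b : ℕ)), abs_pow_mul_pow_lt_one hy hz a b.ne_zero]
  rw [rpow_def_of_pos hpos, mul_comm (log _)]
  rfl

theorem stmt_13 (y z : ℝ) (hy0 : 0 ≤ y) (hy1 : y < 1) (hz0 : 0 ≤ z) (hz1 : z < 1) :
    (∑' p : {p : ℕ × ℕ+ // Nat.gcd p.1 (p.2 : ℕ) = 1},
        (1 / (p.val.2 : ℝ)) * Real.log (1 - y ^ p.val.1 * z ^ (p.val.2 : ℕ)) =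
      1 / (1 - y) * Real.log (1 - z)) ∧
    (∏' p : {p : ℕ × ℕ+ // Nat.gcd p.1 (p.2 : ℕ) = 1},
        (1 - y ^ p.val.1 * z ^ (p.val.2 : ℕ)) ^ ((1 : ℝ) / (p.val.2 : ℝ)) =
      (1 - z) ^ (1 / (1 - y))) := by
  have hy : |y| < 1 := by rwa [abs_of_nonneg hy0]
  have hz : |z| < 1 := by rwa [abs_of_nonneg hz0]
  exact ⟨(hasSum_coprime_one_div_mul_log hy hz).tsum_eq,
    (hasProd_coprime_rpow_one_div hy hz).tprod_eq⟩
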